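/- arXiv:1108.3415 — 2 statements merged into one kernel-verified Lean document; each statement's English description precedes it below -/
import Mathlib

section
/- Let U = {X_0, …, X_{L−1}} be an (N,M,L)-FHS set with N ≥ 2 and L ≥ 2. Then (as rational numbers) A_a(U)/(N(L−1)) + A_c(U)/(N−1) ≥ (NL−M)/(M(N−1)(L−1)), where A_a(U) = S_a(U)/(L(N−1)) and A_c(U) = S_c(U)/(L(L−1)N). -/
open Finset

/-- Periodic Hamming correlation of two FHSs `X, Y : ZMod N → F` at shift `τ`. -/
def Hcorr {N : ℕ} [NeZero N] {F : Type*} [DecidableEq F]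
    (X Y : ZMod N → F) (τ : ZMod N) : ℕ :=
  (Finset.univ.filter (fun t => X t = Y (t + τ))).card

/-- `N_X(a)`: number of occurrences of frequency `a` in the FHS `X`. -/
def countFreq {N : ℕ} [NeZero N] {F : Type*} [DecidableEq F]
    (X : ZMod N → F) (a : F) : ℕ :=
  (Finset.univ.filter (fun t => X t = a)).card

/-- `N_U(a)`: total number of occurrences of `a` in the FHS set `U`. -/
def countFreqSet {N L : ℕ} [NeZero N] {F : Type*} [DecidableEq F]
    (U : Fin L → ZMod N → F) (a : F) : ℕ :=
  ∑ i : Fin L, countFreq (U i) a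

/-- `S_a(U)`: sum of all out-of-phase Hamming autocorrelation values. -/
def Sa {N L : ℕ} [NeZero N] {F : Type*} [DecidableEq F]
    (U : Fin L → ZMod N → F) : ℕ :=
  ∑ i : Fin L, ∑ τ ∈ Finset.univ \ {(0 : ZMod N)}, Hcorr (U i) (U i) τ

/-- `S_c(U)`: sum of all Hamming crosscorrelation values (ordered pairs `i ≠ j`). -/
def Sc {N L : ℕ} [NeZero N] {F : Type*} [DecidableEq F]
    (U : Fin L → ZMod N → F) : ℕ :=
  ∑ i : Fin L, ∑ j ∈ Finset.univ \ {i}, ∑ τ : ZMod N, Hcorr (U i) (U j) τ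

/-- Average Hamming autocorrelation `A_a(U) = S_a(U)/(L(N-1))`. -/
def Aa {N L : ℕ} [NeZero N] {F : Type*} [DecidableEq F]
    (U : Fin L → ZMod N → F) : ℚ :=
  (Sa U : ℚ) / ((L : ℚ) * ((N : ℚ) - 1))

/-- Average Hamming crosscorrelation `A_c(U) = S_c(U)/(L(L-1)N)`. -/
def Ac {N L : ℕ} [NeZero N] {F : Type*} [DecidableEq F]
    (U : Fin L → ZMod N → F) : ℚ :=
  (Sc U : ℚ) / ((L : ℚ) * ((L : ℚ) - 1) * (N : ℚ))

/-- `H_a(U)`: maximum out-of-phase Hamming autocorrelation of the set `U`. -/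
def Ha {N L : ℕ} [NeZero N] {F : Type*} [DecidableEq F]
    (U : Fin L → ZMod N → F) : ℕ :=
  Finset.univ.sup fun i => (Finset.univ \ {(0 : ZMod N)}).sup fun τ => Hcorr (U i) (U i) τ

/-- `H_c(U)`: maximum Hamming crosscorrelation of the set `U`. -/
def Hc {N L : ℕ} [NeZero N] {F : Type*} [DecidableEq F]
    (U : Fin L → ZMod N → F) : ℕ :=
  Finset.univ.sup fun i => (Finset.univ \ {i}).sup fun j =>
    Finset.univ.sup fun τ => Hcorr (U i) (U j) τ

/-- `U` has optimal average Hamming correlation (meets the Peng et al. AHC bound with equality). -/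
def optimalAHC {N L : ℕ} [NeZero N] {F : Type*} [Fintype F] [DecidableEq F]
    (U : Fin L → ZMod N → F) : Prop :=
  Aa U / ((N : ℚ) * ((L : ℚ) - 1)) + Ac U / ((N : ℚ) - 1)
    = ((N : ℚ) * L - Fintype.card F) /
      ((Fintype.card F : ℚ) * ((N : ℚ) - 1) * ((L : ℚ) - 1))

/-- The cyclotomic class `C_r = {α^(Ml+r) : 0 ≤ l ≤ f-1}`. -/
def cycClass {F : Type*} [Monoid F] [DecidableEq F] (α : F) (M f r : ℕ) : Finset F :=
  (Finset.range f).image fun l => α ^ (M * l + r)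

/-- The cyclotomic number `(i,j)_M = |(C_i + 1) ∩ C_j|`. -/
def cycNum {F : Type*} [Field F] [DecidableEq F] (α : F) (M f i j : ℕ) : ℕ :=
  (((cycClass α M f i).image fun x => x + 1) ∩ cycClass α M f j).card


/-!
Sum the Hamming correlations over all shifts: `∑_τ H_{X,Y}(τ) = ∑_a N_X(a) N_Y(a)`, so summing
over all ordered pairs `(i, j)`, including `i = j`, gives `S_a + S_c + LN = ∑_a N_U(a)²`, the
`LN` coming from the in-phase autocorrelations `H_{X_i}(0) = N`. Since `∑_a N_U(a) = LN`,
Cauchy–Schwarz over the `M` frequencies gives `(LN)² ≤ M (S_a + S_c + LN)`, and the bound is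
this inequality rewritten in terms of the averages `A_a` and `A_c`.
-/

section FrequencyCounts

variable {N : ℕ} [NeZero N] {F : Type*} [DecidableEq F]

theorem Hcorr_self_zero (X : ZMod N → F) : Hcorr X X 0 = N := by
  simp [Hcorr, ZMod.card]

variable {L : ℕ}

theorem Sa_add_Sc_add_mul (U : Fin L → ZMod N → F) :
    Sa U + Sc U + L * N = ∑ i, ∑ j, ∑ τ, Hcorr (U i) (U j) τ := by
  have diagonal : ∀ i, ∑ τ, Hcorr (U i) (U i) τ = ∑ τ ∈ univ \ {0}, Hcorr (U i) (U i) τ + N :=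
    fun i => by rw [sum_eq_sum_sdiff_singleton_add (mem_univ 0), Hcorr_self_zero]
  simp_rw [fun i => sum_eq_sum_sdiff_singleton_add (mem_univ i)
    (fun j => ∑ τ, Hcorr (U i) (U j) τ), diagonal, sum_add_distrib]
  simp only [Sa, Sc, sum_const, card_univ, Fintype.card_fin, smul_eq_mul]
  ring

variable [Fintype F]

theorem sum_comp_eq_sum_countFreq_smul {R : Type*} [AddCommMonoid R] (X : ZMod N → F)
    (g : F → R) : ∑ t, g (X t) = ∑ a, countFreq X a • g a := by
  rw [← Finset.sum_fiberwise' univ X g]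
  simp only [sum_const, countFreq]

theorem sum_countFreq (X : ZMod N → F) : ∑ a, countFreq X a = N := by
  simpa [ZMod.card] using (sum_comp_eq_sum_countFreq_smul X (fun _ => (1 : ℕ))).symm

theorem sum_Hcorr_eq_sum_countFreq_mul (X Y : ZMod N → F) :
    ∑ τ, Hcorr X Y τ = ∑ a, countFreq X a * countFreq Y a := by
  have shifts : ∀ t, #{τ | X t = Y (t + τ)} = countFreq Y (X t) := fun t =>
    card_bij' (fun τ _ => t + τ) (fun s _ => s - t) (by simp [eq_comm]) (by simp [eq_comm])
      (by simp) (by simp)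
  simp_rw [Hcorr, card_filter]
  rw [sum_comm]
  simp_rw [← card_filter, shifts]
  exact sum_comp_eq_sum_countFreq_smul X (countFreq Y)

theorem sum_countFreqSet (U : Fin L → ZMod N → F) : ∑ a, countFreqSet U a = L * N := by
  simp_rw [countFreqSet]
  rw [sum_comm]
  simp [sum_countFreq]

theorem sum_sq_countFreqSet (U : Fin L → ZMod N → F) :
    ∑ a, countFreqSet U a ^ 2 = ∑ i, ∑ j, ∑ τ, Hcorr (U i) (U j) τ := by
  simp_rw [sum_Hcorr_eq_sum_countFreq_mul, countFreqSet, sq, sum_mul_sum]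
  rw [sum_comm]
  exact sum_congr rfl fun i _ => sum_comm

theorem sq_mul_le_card_mul (U : Fin L → ZMod N → F) :
    (L * N) ^ 2 ≤ Fintype.card F * (Sa U + Sc U + L * N) := by
  rw [Sa_add_Sc_add_mul, ← sum_sq_countFreqSet, ← sum_countFreqSet U]
  exact sq_sum_le_card_mul_sum_sq

end FrequencyCounts

theorem div_le_div_of_sq_mul_le {K : Type*} [Field K] [LinearOrder K] [IsStrictOrderedRing K]
    {n l m s : K} (hn : 1 < n) (hl : 1 < l) (hm : 0 < m)
    (h : (l * n) ^ 2 ≤ m * (s + l * n)) :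
    (n * l - m) / (m * (n - 1) * (l - 1)) ≤ s / (l * n * (n - 1) * (l - 1)) := by
  have hn1 : 0 < n - 1 := by linarith
  have hl1 : 0 < l - 1 := by linarith
  rw [div_le_div_iff₀ (by positivity) (by positivity)]
  have : (n * l - m) * (l * n) ≤ m * s := by nlinarith
  nlinarith [mul_le_mul_of_nonneg_right this (mul_pos hn1 hl1).le]

/-- the Peng et al. bound on the average Hamming correlation. -/
theorem average_hamming_correlation_bound {N M L : ℕ} [NeZero N] (hN : 2 ≤ N) (hL : 2 ≤ L)
    {F : Type*} [Fintype F] [DecidableEq F] (hM : Fintype.card F = M)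
    (U : Fin L → ZMod N → F) :
    ((N : ℚ) * (L : ℚ) - (M : ℚ)) / ((M : ℚ) * ((N : ℚ) - 1) * ((L : ℚ) - 1))
      ≤ Aa U / ((N : ℚ) * ((L : ℚ) - 1)) + Ac U / ((N : ℚ) - 1) := by
  have hM0 : 0 < M := hM ▸ Fintype.card_pos_iff.2 ⟨U ⟨0, by omega⟩ 0⟩
  have hN : (1 : ℚ) < N := by exact_mod_cast hN
  have hL : (1 : ℚ) < L := by exact_mod_cast hL
  have averages : Aa U / (N * (L - 1)) + Ac U / (N - 1)
      = (Sa U + Sc U : ℚ) / (L * N * (N - 1) * (L - 1)) := by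
    have : (N : ℚ) - 1 ≠ 0 := by linarith
    have : (L : ℚ) - 1 ≠ 0 := by linarith
    rw [Aa, Ac]
    field_simp
  rw [averages]
  refine div_le_div_of_sq_mul_le hN hL (by exact_mod_cast hM0) ?_
  exact_mod_cast hM ▸ sq_mul_le_card_mul U
end

section
/- Let p = Mf + 1 be an odd prime with M ≥ 2 and f ≥ 1, and let U = {X_0, …, X_{M−1}} be the (p, M, M)-FHS set of Construction A, where X_i(0) = i and X_i(t) = r + i (mod M) whenever t ∈ C_r, with C_r the cyclotomic classes of order M in F_p. Then the average Hamming autocorrelation of U equals A_a(U) = f − 1 + 2/M (as a rational number). -/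
open Finset

lemma sum_Hcorr_eq {N : ℕ} [NeZero N] {F : Type*} [Fintype F] [DecidableEq F]
    (X : ZMod N → F) : ∑ τ : ZMod N, Hcorr X X τ = ∑ a : F, (countFreq X a)^2 := by
  have h1 : ∑ τ : ZMod N, Hcorr X X τ = ∑ t : ZMod N, countFreq X (X t) := by
    unfold Hcorr countFreq
    simp_rw [Finset.card_filter]
    rw [Finset.sum_comm]
    refine Finset.sum_congr rfl fun t _ => ?_
    exact Fintype.sum_equiv (Equiv.addLeft t) _ _ fun τ => by simp [eq_comm]
  rw [h1, ← Finset.sum_fiberwise Finset.univ X (fun t => countFreq X (X t))]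
  refine Finset.sum_congr rfl fun a _ => ?_
  have : ∀ t ∈ Finset.univ.filter (fun t => X t = a), countFreq X (X t) = countFreq X a := by
    intro t ht
    rw [(Finset.mem_filter.mp ht).2]
  rw [Finset.sum_congr rfl this, Finset.sum_const, countFreq, smul_eq_mul, sq]

lemma card_filter_mod (M f v : ℕ) (hM : 0 < M) (hv : v < M) :
    ((Finset.range (M*f)).filter (fun k => k % M = v)).card = f := by
  have heq : (Finset.range (M*f)).filter (fun k => k % M = v)
      = (Finset.range f).image (fun l => M*l + v) := by
    ext k
    simp only [mem_filter, mem_range, mem_image]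
    constructor
    · rintro ⟨hk, hm⟩
      refine ⟨k / M, ?_, ?_⟩
      · exact Nat.div_lt_of_lt_mul hk
      · rw [← hm]; exact Nat.div_add_mod k M
    · rintro ⟨l, hl, rfl⟩
      constructor
      · calc M*l + v < M*l + M := by omega
          _ ≤ M*f := by rw [← Nat.mul_succ]; exact Nat.mul_le_mul_left M hl
      · rw [Nat.mul_add_mod, Nat.mod_eq_of_lt hv]
  rw [heq, Finset.card_image_of_injective _ (fun a b h => by
    exact Nat.eq_of_mul_eq_mul_left hM (by omega)), Finset.card_range]


/-- Construction A has average Hamming autocorrelation `f - 1 + 2/M`. -/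
theorem constructionA_Aa (p M f : ℕ) [NeZero p] (hp : p.Prime) (hodd : Odd p)
    (hM : 2 ≤ M) (hf : 1 ≤ f) (hpMf : p = M * f + 1)
    (α : ZMod p) (hα : ∀ x : ZMod p, x ≠ 0 → ∃ k : ℕ, α ^ k = x)
    (U : Fin M → ZMod p → ZMod M)
    (hU0 : ∀ i : Fin M, U i 0 = ((i : ℕ) : ZMod M))
    (hUC : ∀ (i : Fin M) (r : ℕ), r < M → ∀ t ∈ cycClass α M f r,
      U i t = (r : ZMod M) + ((i : ℕ) : ZMod M)) :
    Aa U = (f : ℚ) - 1 + 2 / (M : ℚ) := by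
  haveI : NeZero M := ⟨by omega⟩
  haveI : Fact p.Prime := ⟨hp⟩
  have hM0 : 0 < M := by omega
  have hMf2 : 2 ≤ M * f := le_trans (by omega) (Nat.mul_le_mul hM hf)
  have hp3 : 3 ≤ p := by omega
  haveI : Fact (2 < p) := ⟨by omega⟩
  -- α ≠ 0
  have hα0 : α ≠ 0 := by
    obtain ⟨k, hk⟩ := hα (-1) (neg_ne_zero.mpr one_ne_zero)
    intro h; subst h
    rcases Nat.eq_zero_or_pos k with rfl | hk0
    · rw [pow_zero] at hk
      exact ZMod.neg_one_ne_one hk.symm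
    · rw [zero_pow (by omega)] at hk
      exact neg_ne_zero.mpr one_ne_zero hk.symm
  -- order of α is p - 1
  have hpow1 : α ^ (p - 1) = 1 := ZMod.pow_card_sub_one_eq_one hα0
  have hd_dvd : orderOf α ∣ p - 1 := orderOf_dvd_of_pow_eq_one hpow1
  have hd_pos : 0 < orderOf α := by
    rw [orderOf_pos_iff, isOfFinOrder_iff_pow_eq_one]
    exact ⟨p - 1, by omega, hpow1⟩
  have hS : ((Finset.range (orderOf α)).image (α ^ ·)) = Finset.univ.filter (· ≠ (0 : ZMod p)) := by
    ext x
    simp only [mem_image, mem_range, mem_filter, mem_univ, true_and]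
    constructor
    · rintro ⟨k, _, rfl⟩; exact pow_ne_zero k hα0
    · intro hx
      obtain ⟨k, hk⟩ := hα x hx
      exact ⟨k % orderOf α, Nat.mod_lt _ hd_pos, by rw [pow_mod_orderOf, hk]⟩
  have hcardfilter : (Finset.univ.filter (· ≠ (0 : ZMod p))).card = p - 1 := by
    rw [Finset.filter_ne', Finset.card_erase_of_mem (mem_univ _), Finset.card_univ, ZMod.card]
  have hd : orderOf α = p - 1 := by
    have h1 : p - 1 ≤ orderOf α := by
      have := Finset.card_image_le (s := Finset.range (orderOf α)) (f := (α ^ ·))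
      rw [hS, hcardfilter, Finset.card_range] at this
      exact this
    exact le_antisymm (Nat.le_of_dvd (by omega) hd_dvd) h1
  -- injectivity of powers below p - 1
  have hinj : ∀ k₁ < p - 1, ∀ k₂ < p - 1, α ^ k₁ = α ^ k₂ → k₁ = k₂ := by
    have key : ∀ k₁ k₂, k₁ ≤ k₂ → k₂ < p - 1 → α ^ k₁ = α ^ k₂ → k₁ = k₂ := by
      intro k₁ k₂ hle hlt he
      have h2 : α ^ k₁ * α ^ (k₂ - k₁) = α ^ k₁ * 1 := by
        rw [mul_one, ← pow_add]
        rw [show k₁ + (k₂ - k₁) = k₂ from by omega]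
        exact he.symm
      have h3 : α ^ (k₂ - k₁) = 1 := mul_left_cancel₀ (pow_ne_zero _ hα0) h2
      have h4 : orderOf α ∣ k₂ - k₁ := orderOf_dvd_of_pow_eq_one h3
      rw [hd] at h4
      have := Nat.eq_zero_of_dvd_of_lt h4
      omega
    intro k₁ h₁ k₂ h₂ he
    rcases le_total k₁ k₂ with h | h
    · exact key k₁ k₂ h h₂ he
    · exact (key k₂ k₁ h h₁ he.symm).symm
  -- value formula
  have hval : ∀ (i : Fin M) (k : ℕ), k < M * f →
      U i (α ^ k) = (k : ZMod M) + ((i : ℕ) : ZMod M) := by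
    intro i k hk
    have hmem : α ^ k ∈ cycClass α M f (k % M) := by
      simp only [cycClass, mem_image, mem_range]
      refine ⟨k / M, Nat.div_lt_of_lt_mul hk, ?_⟩
      rw [Nat.div_add_mod k M]
    rw [hUC i (k % M) (Nat.mod_lt _ hM0) _ hmem, ZMod.natCast_mod]
  -- counting formula
  have hcount : ∀ (i : Fin M) (a : ZMod M),
      countFreq (U i) a = f + (if ((i : ℕ) : ZMod M) = a then 1 else 0) := by
    intro i a
    have huniv : (Finset.univ : Finset (ZMod p))
        = insert 0 ((Finset.range (p-1)).image (α ^ ·)) := by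
      rw [← hd, hS, Finset.filter_ne']
      rw [Finset.insert_erase (mem_univ _)]
    have h0notin : (0 : ZMod p) ∉ (Finset.range (p-1)).image (α ^ ·) := by
      rw [← hd, hS]
      simp
    unfold countFreq
    rw [huniv, Finset.filter_insert]
    have hfilim : ((Finset.range (p-1)).image (α ^ ·)).filter (fun t => U i t = a)
        = ((Finset.range (p-1)).filter (fun k => U i (α ^ k) = a)).image (α ^ ·) := by
      ext x
      simp only [Finset.mem_filter, Finset.mem_image]
      constructor
      · rintro ⟨⟨k, hk, rfl⟩, hx⟩
        exact ⟨k, ⟨hk, hx⟩, rfl⟩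
      · rintro ⟨k, ⟨hk1, hk2⟩, rfl⟩
        exact ⟨⟨k, hk1, rfl⟩, hk2⟩
    have hcardim : (((Finset.range (p-1)).filter (fun k => U i (α ^ k) = a)).image (α ^ ·)).card
        = ((Finset.range (p-1)).filter (fun k => U i (α ^ k) = a)).card := by
      apply Finset.card_image_of_injOn
      intro k₁ hk₁ k₂ hk₂ he
      simp only [coe_filter, Set.mem_setOf_eq, mem_range] at hk₁ hk₂
      exact hinj k₁ hk₁.1 k₂ hk₂.1 he
    have hfil2 : (Finset.range (p-1)).filter (fun k => U i (α ^ k) = a)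
        = (Finset.range (M*f)).filter (fun k => k % M = (a - ((i : ℕ) : ZMod M)).val) := by
      have hpm : p - 1 = M * f := by omega
      rw [hpm]
      apply Finset.filter_congr
      intro k hk
      rw [mem_range] at hk
      rw [hval i k hk]
      constructor
      · intro h
        have : (k : ZMod M) = a - ((i : ℕ) : ZMod M) := by
          rw [← h]; ring
        rw [← this, ZMod.val_natCast]
      · intro h
        have : (k : ZMod M) = a - ((i : ℕ) : ZMod M) := by
          have := ZMod.natCast_mod k M
          rw [h] at this
          rw [← this, ZMod.natCast_val, ZMod.cast_id]
        rw [this]; ring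
    have hcard2 : ((Finset.range (M*f)).filter
        (fun k => k % M = (a - ((i : ℕ) : ZMod M)).val)).card = f :=
      card_filter_mod M f _ hM0 (ZMod.val_lt _)
    by_cases hcase : U i 0 = a
    · rw [if_pos hcase, Finset.card_insert_of_notMem (fun hmem => h0notin (Finset.mem_of_mem_filter _ hmem))]
      rw [hfilim, hcardim, hfil2, hcard2]
      rw [hU0 i] at hcase
      rw [if_pos hcase]
    · rw [if_neg hcase]
      rw [hfilim, hcardim, hfil2, hcard2]
      rw [hU0 i] at hcase
      rw [if_neg hcase]
      omega
  -- sum of all autocorrelations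
  have hsum : ∀ i : Fin M, ∑ τ : ZMod p, Hcorr (U i) (U i) τ = M * f^2 + 2*f + 1 := by
    intro i
    rw [sum_Hcorr_eq]
    have hpt : ∀ a : ZMod M, (countFreq (U i) a)^2
        = f^2 + (if a = ((i : ℕ) : ZMod M) then 2*f+1 else 0) := by
      intro a
      rw [hcount i a]
      by_cases h : ((i : ℕ) : ZMod M) = a
      · rw [if_pos h, if_pos h.symm]; ring
      · rw [if_neg h, if_neg (fun hh => h hh.symm)]; ring
    rw [Finset.sum_congr rfl (fun a _ => hpt a), Finset.sum_add_distrib,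
      Finset.sum_const, Finset.sum_ite_eq' Finset.univ _ (fun _ => 2*f+1),
      if_pos (mem_univ _), Finset.card_univ, ZMod.card, smul_eq_mul]
    ring
  have hH0 : ∀ i : Fin M, Hcorr (U i) (U i) 0 = p := by
    intro i
    unfold Hcorr
    simp [ZMod.card]
  have key : ∀ i : Fin M,
      (∑ τ ∈ Finset.univ \ {(0 : ZMod p)}, Hcorr (U i) (U i) τ) + p = M * f^2 + 2*f + 1 := by
    intro i
    have hsplit : ∑ τ : ZMod p, Hcorr (U i) (U i) τ
        = (∑ τ ∈ Finset.univ \ {(0 : ZMod p)}, Hcorr (U i) (U i) τ) + Hcorr (U i) (U i) 0 := by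
      exact Finset.sum_eq_sum_sdiff_singleton_add (mem_univ (0 : ZMod p)) _
    rw [← hsum i, hsplit, hH0 i]
  have hSaN : Sa U + M * p = M * (M * f^2 + 2*f + 1) := by
    unfold Sa
    calc (∑ i : Fin M, ∑ τ ∈ Finset.univ \ {(0 : ZMod p)}, Hcorr (U i) (U i) τ) + M * p
        = ∑ i : Fin M, ((∑ τ ∈ Finset.univ \ {(0 : ZMod p)}, Hcorr (U i) (U i) τ) + p) := by
          rw [Finset.sum_add_distrib, Finset.sum_const, Finset.card_univ, Fintype.card_fin,
            smul_eq_mul]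
      _ = ∑ _i : Fin M, (M * f^2 + 2*f + 1) := Finset.sum_congr rfl (fun i _ => key i)
      _ = M * (M * f^2 + 2*f + 1) := by
          rw [Finset.sum_const, Finset.card_univ, Fintype.card_fin, smul_eq_mul]
  -- final computation in ℚ
  have hSaQ : (Sa U : ℚ) = M * (M * f^2 + 2*f + 1) - M * p := by
    have := hSaN
    have h' : ((Sa U + M * p : ℕ) : ℚ) = ((M * (M * f^2 + 2*f + 1) : ℕ) : ℚ) := by
      exact_mod_cast congrArg (Nat.cast : ℕ → ℚ) this
    push_cast at h'
    linarith
  have hpQ : (p : ℚ) = M * f + 1 := by exact_mod_cast congrArg (Nat.cast : ℕ → ℚ) hpMf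
  have hMQ : (M : ℚ) ≠ 0 := by positivity
  have hfQ : (f : ℚ) ≠ 0 := by positivity
  unfold Aa
  rw [hSaQ, hpQ]
  field_simp
  ring
end
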